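/- Let P be the projector of a permutation-invariant n-qubit quantum code. Let |AUX_picode⟩ = |φ_picode⟩⊗|φ_picode⟩ with |φ_picode⟩ = Σ_{0≤x+y+z≤n} tr(σ_{x,y,z,n}P)|σ_{x,y,z,n}⟩, let W_n = Σ_{0≤x+y+z≤n} Σ_{τ∈C_{x,y,z,n}} |τ⟩⟨σ_{x,y,z,n}|, and let M_A^{SL}, M_B^{SL} be the Shor–Laflamme connection matrices M_A^{SL} = Σ_{i=0}^{n} Σ_{E∈G_n, wt(E)=i} Σ_{σ,τ∈G_n} 2^{−2n} tr(Eσ)tr(E†τ)|i⟩⟨σ|⟨τ| and M_B^{SL} = Σ_{i=0}^{n} Σ_{E∈G_n, wt(E)=i} Σ_{σ,τ∈G_n} 2^{−2n} tr(Eσ E†τ)|i⟩⟨σ|⟨τ|. Then M_A^{SL}(W_n⊗W_n)|AUX_picode⟩ = (tr P)²|A^{SL}⟩ and M_B^{SL}(W_n⊗W_n)|AUX_picode⟩ = (tr P)|B^{SL}⟩, where |A^{SL}⟩ = Σ_j A_j^{SL}|j⟩ and |B^{SL}⟩ = Σ_j B_j^{SL}|j⟩. -/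

import Mathlib

open Matrix BigOperators Kronecker

/-- The single-qubit Pauli matrices `I, X, Y, Z`, indexed by `Fin 4`. -/
noncomputable def pauli1 (k : Fin 4) : Matrix (Fin 2) (Fin 2) ℂ :=
  if k = 0 then 1
  else if k = 1 then !![0, 1; 1, 0]
  else if k = 2 then !![0, -Complex.I; Complex.I, 0]
  else !![1, 0; 0, -1]

/-- The `n`-qubit Pauli operator labelled by `p : Fin n → Fin 4`, i.e. the tensor product
`pauli1 (p 0) ⊗ ⋯ ⊗ pauli1 (p (n-1))`, acting on `(ℂ²)^{⊗n} ≅ ℂ^{2^n}` (whose standard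
basis is indexed by `Fin n → Fin 2`).  The map `p ↦ PauliOp n p` enumerates `G_n`. -/
noncomputable def PauliOp (n : ℕ) (p : Fin n → Fin 4) :
    Matrix (Fin n → Fin 2) (Fin n → Fin 2) ℂ :=
  fun v w => ∏ i, pauli1 (p i) (v i) (w i)

/-- The weight of a Pauli label: the number of non-identity tensor factors. -/
def pwt {n : ℕ} (p : Fin n → Fin 4) : ℕ :=
  (Finset.univ.filter fun i => p i ≠ 0).card

/-- The unitary qubit-permutation operator associated with `π ∈ S_n`, acting on
`(ℂ²)^{⊗n}` by permuting the tensor factors. -/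
noncomputable def permMat (n : ℕ) (π : Equiv.Perm (Fin n)) :
    Matrix (Fin n → Fin 2) (Fin n → Fin 2) ℂ :=
  fun v w => if w = v ∘ π then 1 else 0

/-- The Pauli label of `σ_{x,y,z,n} = X^{⊗x} ⊗ Y^{⊗y} ⊗ Z^{⊗z} ⊗ I^{⊗(n-x-y-z)}`. -/
def sigmaLabel (n x y z : ℕ) : Fin n → Fin 4 :=
  fun i => if (i : ℕ) < x then 1
    else if (i : ℕ) < x + y then 2
    else if (i : ℕ) < x + y + z then 3
    else 0

/-- The index set of representatives: triples `(x,y,z)` with `x + y + z ≤ n`. -/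
abbrev PRep (n : ℕ) :=
  {t : Fin (n + 1) × Fin (n + 1) × Fin (n + 1) //
    (t.1 : ℕ) + (t.2.1 : ℕ) + (t.2.2 : ℕ) ≤ n}

/-- The Pauli operator `σ_{x,y,z,n}` attached to a representative. -/
noncomputable def sigmaRep (n : ℕ) (r : PRep n) :
    Matrix (Fin n → Fin 2) (Fin n → Fin 2) ℂ :=
  PauliOp n (sigmaLabel n (r.1.1 : ℕ) (r.1.2.1 : ℕ) (r.1.2.2 : ℕ))

/-- `PauliOp n τ` belongs to the orbit `C_{x,y,z,n} = {π σ_{x,y,z,n} π† : π ∈ S_n}`. -/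
def inOrbit (n : ℕ) (τ : Fin n → Fin 4) (r : PRep n) : Prop :=
  ∃ π : Equiv.Perm (Fin n),
    PauliOp n τ = permMat n π * sigmaRep n r * (permMat n π)ᴴ

open Classical in
/-- The matrix `W_n = Σ_{x+y+z≤n} Σ_{τ ∈ C_{x,y,z,n}} |τ⟩⟨σ_{x,y,z,n}|` mapping each
representative to the (indicator of its) orbit. -/
noncomputable def Wn (n : ℕ) : Matrix (Fin n → Fin 4) (PRep n) ℂ :=
  fun τ r => if inOrbit n τ r then 1 else 0

/-- The compressed auxiliary vector `|φ_picode⟩ = Σ_{x+y+z≤n} tr(σ_{x,y,z,n}P) |σ_{x,y,z,n}⟩`. -/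
noncomputable def phiPicode (n : ℕ) (P : Matrix (Fin n → Fin 2) (Fin n → Fin 2) ℂ) :
    PRep n → ℂ :=
  fun r => Matrix.trace (sigmaRep n r * P)

/-- The Shor–Laflamme connection matrix
`M_A^SL = Σ_i Σ_{E∈G_n, wt E = i} Σ_{σ,τ} 2^{-2n} tr(Eσ)tr(E†τ) |i⟩⟨σ|⟨τ|`. -/
noncomputable def MASL (n : ℕ) :
    Matrix (Fin (n + 1)) ((Fin n → Fin 4) × (Fin n → Fin 4)) ℂ :=
  fun i στ => ((2 : ℂ) ^ (2 * n))⁻¹ *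
    ∑ p ∈ Finset.univ.filter (fun p : Fin n → Fin 4 => pwt p = (i : ℕ)),
      Matrix.trace (PauliOp n p * PauliOp n στ.1) *
        Matrix.trace ((PauliOp n p)ᴴ * PauliOp n στ.2)

/-- The Shor–Laflamme connection matrix
`M_B^SL = Σ_i Σ_{E∈G_n, wt E = i} Σ_{σ,τ} 2^{-2n} tr(EσE†τ) |i⟩⟨σ|⟨τ|`. -/
noncomputable def MBSL (n : ℕ) :
    Matrix (Fin (n + 1)) ((Fin n → Fin 4) × (Fin n → Fin 4)) ℂ :=
  fun i στ => ((2 : ℂ) ^ (2 * n))⁻¹ *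
    ∑ p ∈ Finset.univ.filter (fun p : Fin n → Fin 4 => pwt p = (i : ℕ)),
      Matrix.trace (PauliOp n p * PauliOp n στ.1 * (PauliOp n p)ᴴ * PauliOp n στ.2)

/-- The compressed auxiliary enumerator `|AUX_picode⟩ = |φ_picode⟩ ⊗ |φ_picode⟩`. -/
noncomputable def AUXpicode (n : ℕ) (P : Matrix (Fin n → Fin 2) (Fin n → Fin 2) ℂ) :
    PRep n × PRep n → ℂ :=
  fun rs => phiPicode n P rs.1 * phiPicode n P rs.2

/-- The Shor–Laflamme A-type enumerator `A_i^SL = (1/tr(P)²) Σ_{wt E = i} tr(EP)tr(E†P)`. -/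
noncomputable def ASL (n : ℕ) (P : Matrix (Fin n → Fin 2) (Fin n → Fin 2) ℂ)
    (i : ℕ) : ℂ :=
  (1 / (Matrix.trace P) ^ 2) *
    ∑ p ∈ Finset.univ.filter (fun p : Fin n → Fin 4 => pwt p = i),
      Matrix.trace (PauliOp n p * P) * Matrix.trace ((PauliOp n p)ᴴ * P)

/-- The Shor–Laflamme B-type enumerator `B_i^SL = (1/tr(P)) Σ_{wt E = i} tr(EPE†P)`. -/
noncomputable def BSL (n : ℕ) (P : Matrix (Fin n → Fin 2) (Fin n → Fin 2) ℂ)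
    (i : ℕ) : ℂ :=
  (1 / Matrix.trace P) *
    ∑ p ∈ Finset.univ.filter (fun p : Fin n → Fin 4 => pwt p = i),
      Matrix.trace (PauliOp n p * P * (PauliOp n p)ᴴ * P)

lemma pauli1_conj (k : Fin 4) (a b : Fin 2) :
    (starRingEnd ℂ) (pauli1 k a b) = pauli1 k b a := by
  fin_cases k <;> fin_cases a <;> fin_cases b <;>
    simp [pauli1, Matrix.one_apply]

lemma pauli1_trace_mul (j k : Fin 4) :
    ∑ a : Fin 2, ∑ b : Fin 2, pauli1 j a b * pauli1 k b a =
      if j = k then 2 else 0 := by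
  fin_cases j <;> fin_cases k <;>
    simp [pauli1, Fin.sum_univ_two, Matrix.one_apply, Complex.I_mul_I] <;> ring_nf <;>
    simp [Complex.I_sq]

lemma pauli1_complete (a b c d : Fin 2) :
    ∑ k : Fin 4, pauli1 k a b * pauli1 k c d =
      if a = d ∧ b = c then 2 else 0 := by
  fin_cases a <;> fin_cases b <;> fin_cases c <;> fin_cases d <;>
    simp [pauli1, Fin.sum_univ_four, Matrix.one_apply, Complex.I_mul_I] <;> ring_nf <;>
    simp [Complex.I_sq] <;> ring

lemma pauliOp_conjTranspose (n : ℕ) (p : Fin n → Fin 4) :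
    (PauliOp n p)ᴴ = PauliOp n p := by
  ext v w
  simp only [conjTranspose_apply, PauliOp, star_prod]
  exact Finset.prod_congr rfl fun i _ => pauli1_conj _ _ _

lemma trace_pauliOp_mul (n : ℕ) (p q : Fin n → Fin 4) :
    Matrix.trace (PauliOp n p * PauliOp n q) = if p = q then (2 : ℂ) ^ n else 0 := by
  have h1 : Matrix.trace (PauliOp n p * PauliOp n q) =
      ∑ v : Fin n → Fin 2, ∑ w : Fin n → Fin 2,
        ∏ i, (pauli1 (p i) (v i) (w i) * pauli1 (q i) (w i) (v i)) := by
    simp [Matrix.trace, Matrix.mul_apply, Matrix.diag, PauliOp, Finset.prod_mul_distrib]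
  rw [h1]
  have h2 : ∀ v : Fin n → Fin 2, ∑ w : Fin n → Fin 2,
      ∏ i, (pauli1 (p i) (v i) (w i) * pauli1 (q i) (w i) (v i)) =
      ∏ i, ∑ b : Fin 2, (pauli1 (p i) (v i) b * pauli1 (q i) b (v i)) := by
    intro v; rw [Fintype.prod_sum]
  rw [Finset.sum_congr rfl fun v _ => h2 v, ← Fintype.prod_sum (fun (i : Fin n) (a : Fin 2) => ∑ b : Fin 2, pauli1 (p i) a b * pauli1 (q i) b a)]
  have h3 : ∀ i : Fin n, (∑ a : Fin 2, ∑ b : Fin 2,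
      pauli1 (p i) a b * pauli1 (q i) b a) = if p i = q i then 2 else 0 :=
    fun i => pauli1_trace_mul (p i) (q i)
  rw [Finset.prod_congr rfl fun i _ => h3 i]
  by_cases h : p = q
  · subst h; simp
  · obtain ⟨i, hi⟩ := Function.ne_iff.mp h
    rw [Finset.prod_eq_zero (Finset.mem_univ i) (by simp [hi]), if_neg h]

lemma pauli_expand (n : ℕ) (M : Matrix (Fin n → Fin 2) (Fin n → Fin 2) ℂ) :
    ∑ σ : Fin n → Fin 4, Matrix.trace (PauliOp n σ * M) • PauliOp n σ =
      ((2 : ℂ) ^ n) • M := by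
  ext a b
  simp only [Finset.sum_apply, Matrix.sum_apply, Matrix.smul_apply, smul_eq_mul,
    Matrix.trace, Matrix.diag, Matrix.mul_apply, PauliOp]
  have key : ∀ σ : Fin n → Fin 4,
      (∑ v : Fin n → Fin 2, ∑ w : Fin n → Fin 2,
        (∏ i, pauli1 (σ i) (v i) (w i)) * M w v) * ∏ i, pauli1 (σ i) (a i) (b i)
      = ∑ v : Fin n → Fin 2, ∑ w : Fin n → Fin 2,
          M w v * ∏ i, (pauli1 (σ i) (v i) (w i) * pauli1 (σ i) (a i) (b i)) := by
    intro σ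
    rw [Finset.sum_mul]
    refine Finset.sum_congr rfl fun v _ => ?_
    rw [Finset.sum_mul]
    refine Finset.sum_congr rfl fun w _ => ?_
    rw [Finset.prod_mul_distrib]; ring
  rw [Finset.sum_congr rfl fun σ _ => key σ]
  rw [Finset.sum_comm]
  have swap2 : ∀ v : Fin n → Fin 2, (∑ σ : Fin n → Fin 4, ∑ w : Fin n → Fin 2,
      M w v * ∏ i, (pauli1 (σ i) (v i) (w i) * pauli1 (σ i) (a i) (b i)))
      = ∑ w : Fin n → Fin 2, M w v *
        ∑ σ : Fin n → Fin 4, ∏ i, (pauli1 (σ i) (v i) (w i) * pauli1 (σ i) (a i) (b i)) := by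
    intro v
    rw [Finset.sum_comm]
    exact Finset.sum_congr rfl fun w _ => (Finset.mul_sum _ _ _).symm
  rw [Finset.sum_congr rfl fun v _ => swap2 v]
  have inner : ∀ v w : Fin n → Fin 2,
      (∑ σ : Fin n → Fin 4, ∏ i, (pauli1 (σ i) (v i) (w i) * pauli1 (σ i) (a i) (b i)))
      = if v = b ∧ w = a then (2 : ℂ) ^ n else 0 := by
    intro v w
    rw [← Fintype.prod_sum (fun (i : Fin n) (k : Fin 4) =>
      pauli1 k (v i) (w i) * pauli1 k (a i) (b i))]
    have : ∀ i : Fin n, (∑ k : Fin 4, pauli1 k (v i) (w i) * pauli1 k (a i) (b i))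
        = if v i = b i ∧ w i = a i then 2 else 0 := fun i => pauli1_complete _ _ _ _
    rw [Finset.prod_congr rfl fun i _ => this i]
    by_cases h : v = b ∧ w = a
    · obtain ⟨h1, h2⟩ := h; subst h1; subst h2; simp
    · rw [if_neg h]
      rw [Decidable.not_and_iff_or_not] at h
      rcases h with h | h <;> obtain ⟨i, hi⟩ := Function.ne_iff.mp h <;>
        exact Finset.prod_eq_zero (Finset.mem_univ i) (by simp [hi])
  have fin : ∀ v : Fin n → Fin 2, (∑ w : Fin n → Fin 2, M w v *
      (if v = b ∧ w = a then (2 : ℂ) ^ n else 0))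
      = if v = b then M a v * 2 ^ n else 0 := by
    intro v
    by_cases hv : v = b
    · subst hv; simp [Finset.sum_ite_eq' Finset.univ a (fun w => M w v * 2 ^ n), mul_comm]
    · simp [hv]
  calc ∑ v : Fin n → Fin 2, ∑ w : Fin n → Fin 2, M w v *
        ∑ σ : Fin n → Fin 4, ∏ i, (pauli1 (σ i) (v i) (w i) * pauli1 (σ i) (a i) (b i))
      = ∑ v : Fin n → Fin 2, (if v = b then M a v * 2 ^ n else 0) := by
        refine Finset.sum_congr rfl fun v _ => ?_
        rw [Finset.sum_congr rfl fun w _ => by rw [inner v w]]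
        exact fin v
    _ = (2 : ℂ) ^ n • M a b := by simp [mul_comm]

lemma sum_trace_mul (n : ℕ) (E M : Matrix (Fin n → Fin 2) (Fin n → Fin 2) ℂ) :
    ∑ σ : Fin n → Fin 4, Matrix.trace (PauliOp n σ * M) * Matrix.trace (E * PauliOp n σ)
      = (2 : ℂ) ^ n * Matrix.trace (E * M) := by
  have h := congrArg (fun N => Matrix.trace (E * N)) (pauli_expand n M)
  simpa [Matrix.mul_sum, Matrix.trace_sum, Matrix.mul_smul, Matrix.trace_smul,
    smul_eq_mul] using h

lemma permMat_conjTranspose (n : ℕ) (π : Equiv.Perm (Fin n)) :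
    (permMat n π)ᴴ = permMat n π⁻¹ := by
  ext v w
  show star (if v = w ∘ π then (1:ℂ) else 0) = if w = v ∘ ⇑π⁻¹ then 1 else 0
  have hiff : (v = w ∘ ⇑π) ↔ (w = v ∘ ⇑π⁻¹) :=
    ⟨by rintro rfl; ext i; simp, by rintro rfl; ext i; simp⟩
  rw [apply_ite (star : ℂ → ℂ), star_one, star_zero]
  exact if_congr hiff rfl rfl

lemma perm_conj (n : ℕ) (π : Equiv.Perm (Fin n)) (p : Fin n → Fin 4) :
    permMat n π * PauliOp n p * (permMat n π)ᴴ = PauliOp n (p ∘ π.symm) := by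
  rw [permMat_conjTranspose]
  ext v w
  have h1 : (permMat n π * PauliOp n p * permMat n π⁻¹) v w
      = ∑ u, (∑ t, permMat n π v t * PauliOp n p t u) * permMat n π⁻¹ u w := by
    simp [Matrix.mul_apply]
  rw [h1]
  have h2 : ∀ u, (∑ t, permMat n π v t * PauliOp n p t u) = PauliOp n p (v ∘ π) u := by
    intro u
    rw [Finset.sum_eq_single (v ∘ π)] <;> simp [permMat] <;> tauto
  rw [Finset.sum_congr rfl fun u _ => by rw [h2 u]]
  rw [Finset.sum_eq_single (w ∘ π)]
  · have : permMat n π⁻¹ (w ∘ π) w = 1 := by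
      simp only [permMat, if_pos]; rw [if_pos]; ext i; simp
    rw [this, mul_one]
    show ∏ i, pauli1 (p i) (v (π i)) (w (π i)) = ∏ i, pauli1 (p (π.symm i)) (v i) (w i)
    rw [← Equiv.prod_comp π (fun i => pauli1 (p (π.symm i)) (v i) (w i))]
    exact Finset.prod_congr rfl fun i _ => by simp
  · intro u _ hu
    have : permMat n π⁻¹ u w = 0 := by
      simp only [permMat, ite_eq_right_iff]
      intro h; exfalso; apply hu; rw [h]; ext i; simp
    rw [this, mul_zero]
  · simp

lemma pauliOp_injective (n : ℕ) : Function.Injective (PauliOp n) := by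
  intro p q h
  have h1 := trace_pauliOp_mul n p q
  rw [h, trace_pauliOp_mul] at h1
  by_contra hpq
  rw [if_neg hpq, if_pos rfl] at h1
  exact (pow_ne_zero n two_ne_zero) h1

def cnt {n : ℕ} (f : Fin n → Fin 4) (k : Fin 4) : ℕ :=
  (Finset.univ.filter fun i => f i = k).card

lemma cnt_comp_perm {n : ℕ} (f : Fin n → Fin 4) (π : Equiv.Perm (Fin n)) (k : Fin 4) :
    cnt (f ∘ π) k = cnt f k := by
  classical
  unfold cnt
  rw [← Fintype.card_subtype, ← Fintype.card_subtype]
  exact Fintype.card_congr (π.subtypeEquiv (by intro i; simp))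

lemma exists_perm_iff_cnt {n : ℕ} (τ g : Fin n → Fin 4) :
    (∃ π : Equiv.Perm (Fin n), τ = g ∘ π) ↔ ∀ k, cnt τ k = cnt g k := by
  constructor
  · rintro ⟨π, rfl⟩ k; exact cnt_comp_perm g π k
  · intro h
    have e : ∀ k : Fin 4, {i // τ i = k} ≃ {i // g i = k} := fun k =>
      Fintype.equivOfCardEq (by
        rw [Fintype.card_subtype, Fintype.card_subtype]; exact h k)
    refine ⟨Equiv.ofFiberEquiv e, ?_⟩
    funext i
    exact (Equiv.ofFiberEquiv_map e i).symm

lemma card_filter_Ico (n a b : ℕ) (hb : b ≤ n) :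
    (Finset.univ.filter fun i : Fin n => a ≤ (i : ℕ) ∧ (i : ℕ) < b).card = b - a := by
  classical
  rw [← Nat.card_Ico a b]
  apply Finset.card_bij (fun (i : Fin n) _ => (i : ℕ))
  · intro i hi; simp only [Finset.mem_filter] at hi; simp [Finset.mem_Ico, hi.2.1, hi.2.2]
  · intro i _ j _ h; exact Fin.ext h
  · intro m hm
    rw [Finset.mem_Ico] at hm
    exact ⟨⟨m, lt_of_lt_of_le hm.2 hb⟩, by simp [hm.1, hm.2], rfl⟩

lemma cnt_sigmaLabel (n x y z : ℕ) (h : x + y + z ≤ n) :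
    cnt (sigmaLabel n x y z) 1 = x ∧ cnt (sigmaLabel n x y z) 2 = y ∧
      cnt (sigmaLabel n x y z) 3 = z := by
  classical
  refine ⟨?_, ?_, ?_⟩
  · have : (Finset.univ.filter fun i : Fin n => sigmaLabel n x y z i = 1)
        = Finset.univ.filter fun i : Fin n => 0 ≤ (i : ℕ) ∧ (i : ℕ) < x := by
      ext i
      rw [Finset.mem_filter, Finset.mem_filter]
      simp only [Finset.mem_filter, Finset.mem_univ, true_and, sigmaLabel]
      split_ifs with h1 h2 h3 <;> simp_all <;> omega
    rw [cnt, this, card_filter_Ico n 0 x (by omega)]; omega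
  · have : (Finset.univ.filter fun i : Fin n => sigmaLabel n x y z i = 2)
        = Finset.univ.filter fun i : Fin n => x ≤ (i : ℕ) ∧ (i : ℕ) < x + y := by
      ext i
      rw [Finset.mem_filter, Finset.mem_filter]
      simp only [Finset.mem_filter, Finset.mem_univ, true_and, sigmaLabel]
      split_ifs with h1 h2 h3 <;> simp_all <;> omega
    rw [cnt, this, card_filter_Ico n x (x + y) (by omega)]; omega
  · have : (Finset.univ.filter fun i : Fin n => sigmaLabel n x y z i = 3)
        = Finset.univ.filter fun i : Fin n => x + y ≤ (i : ℕ) ∧ (i : ℕ) < x + y + z := by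
      ext i
      rw [Finset.mem_filter, Finset.mem_filter]
      simp only [Finset.mem_filter, Finset.mem_univ, true_and, sigmaLabel]
      split_ifs with h1 h2 h3 <;> simp_all <;> omega
    rw [cnt, this, card_filter_Ico n (x + y) (x + y + z) (by omega)]; omega

lemma cnt_sum_le {n : ℕ} (τ : Fin n → Fin 4) : cnt τ 1 + cnt τ 2 + cnt τ 3 ≤ n := by
  classical
  have h : ∑ k : Fin 4, cnt τ k = n := by
    have := Finset.card_eq_sum_card_fiberwise
      (f := τ) (s := Finset.univ) (t := Finset.univ) (fun i _ => Finset.mem_univ (τ i))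
    simpa [cnt] using this.symm
  rw [Fin.sum_univ_four] at h
  omega

lemma inOrbit_iff_cnt (n : ℕ) (τ : Fin n → Fin 4) (r : PRep n) :
    inOrbit n τ r ↔
      cnt τ 1 = (r.1.1 : ℕ) ∧ cnt τ 2 = (r.1.2.1 : ℕ) ∧ cnt τ 3 = (r.1.2.2 : ℕ) := by
  obtain ⟨hc1, hc2, hc3⟩ := cnt_sigmaLabel n (r.1.1 : ℕ) (r.1.2.1 : ℕ) (r.1.2.2 : ℕ) r.2
  constructor
  · rintro ⟨π, hπ⟩
    rw [sigmaRep, perm_conj] at hπ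
    have hτ := pauliOp_injective n hπ
    have : ∃ π' : Equiv.Perm (Fin n),
        τ = sigmaLabel n (r.1.1 : ℕ) (r.1.2.1 : ℕ) (r.1.2.2 : ℕ) ∘ π' := ⟨π.symm, hτ⟩
    have hcnt := (exists_perm_iff_cnt _ _).mp this
    exact ⟨(hcnt 1).trans hc1, (hcnt 2).trans hc2, (hcnt 3).trans hc3⟩
  · rintro ⟨h1, h2, h3⟩
    have hcnt : ∀ k, cnt τ k = cnt (sigmaLabel n (r.1.1 : ℕ) (r.1.2.1 : ℕ) (r.1.2.2 : ℕ)) k := by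
      intro k
      have hs : ∑ k : Fin 4, cnt τ k = n := by
        have := Finset.card_eq_sum_card_fiberwise
          (f := τ) (s := Finset.univ) (t := Finset.univ) (fun i _ => Finset.mem_univ (τ i))
        simpa [cnt] using this.symm
      have hs' : ∑ k : Fin 4, cnt (sigmaLabel n (r.1.1 : ℕ) (r.1.2.1 : ℕ) (r.1.2.2 : ℕ)) k
          = n := by
        have := Finset.card_eq_sum_card_fiberwise
          (f := sigmaLabel n (r.1.1 : ℕ) (r.1.2.1 : ℕ) (r.1.2.2 : ℕ)) (s := Finset.univ)
          (t := Finset.univ) (fun i _ => Finset.mem_univ _)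
        simpa [cnt] using this.symm
      rw [Fin.sum_univ_four] at hs hs'
      have h0 : cnt τ 0 = cnt (sigmaLabel n (r.1.1 : ℕ) (r.1.2.1 : ℕ) (r.1.2.2 : ℕ)) 0 := by
        omega
      fin_cases k
      exacts [h0, h1.trans hc1.symm, h2.trans hc2.symm, h3.trans hc3.symm]
    obtain ⟨π, hπ⟩ := (exists_perm_iff_cnt _ _).mpr hcnt
    refine ⟨π.symm, ?_⟩
    rw [sigmaRep, perm_conj]
    congr 1

lemma inOrbit_unique (n : ℕ) (τ : Fin n → Fin 4) :
    ∃! r : PRep n, inOrbit n τ r := by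
  have hle := cnt_sum_le τ
  refine ⟨⟨(⟨cnt τ 1, by omega⟩, ⟨cnt τ 2, by omega⟩, ⟨cnt τ 3, by omega⟩), by simpa using hle⟩,
    ?_, ?_⟩
  · show inOrbit n τ _
    rw [inOrbit_iff_cnt]; exact ⟨rfl, rfl, rfl⟩
  · rintro r hr
    rw [inOrbit_iff_cnt] at hr
    obtain ⟨h1, h2, h3⟩ := hr
    apply Subtype.ext
    ext <;> simp [← h1, ← h2, ← h3]

lemma trace_orbit (n : ℕ) (P : Matrix (Fin n → Fin 2) (Fin n → Fin 2) ℂ)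
    (hperm : ∀ π : Equiv.Perm (Fin n), permMat n π * P = P ∧ P * permMat n π = P)
    (τ : Fin n → Fin 4) (r : PRep n) (h : inOrbit n τ r) :
    Matrix.trace (sigmaRep n r * P) = Matrix.trace (PauliOp n τ * P) := by
  obtain ⟨π, hπ⟩ := h
  rw [hπ, permMat_conjTranspose]
  have h1 : permMat n π⁻¹ * P = P := (hperm π⁻¹).1
  have h2 : P * permMat n π = P := (hperm π).2
  have e1 : permMat n π * sigmaRep n r * permMat n π⁻¹ * P
      = permMat n π * (sigmaRep n r * P) := by
    rw [mul_assoc (permMat n π) (sigmaRep n r), mul_assoc (permMat n π), mul_assoc, h1]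
  rw [e1, Matrix.trace_mul_comm (permMat n π) (sigmaRep n r * P), mul_assoc, h2]

lemma Wn_mulVec (n : ℕ) (P : Matrix (Fin n → Fin 2) (Fin n → Fin 2) ℂ)
    (hperm : ∀ π : Equiv.Perm (Fin n), permMat n π * P = P ∧ P * permMat n π = P) :
    (Wn n).mulVec (phiPicode n P) = fun τ => Matrix.trace (PauliOp n τ * P) := by
  classical
  funext τ
  obtain ⟨r₀, hr₀, huniq⟩ := inOrbit_unique n τ
  have key : ∀ r : PRep n, Wn n τ r * phiPicode n P r
      = if r = r₀ then Matrix.trace (PauliOp n τ * P) else 0 := by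
    intro r
    by_cases h : r = r₀
    · subst h
      rw [if_pos rfl, Wn, if_pos hr₀, one_mul, phiPicode, trace_orbit n P hperm τ r hr₀]
    · rw [if_neg h, Wn, if_neg, zero_mul]
      intro hin
      exact h (huniq r hin)
  rw [Matrix.mulVec, dotProduct, Finset.sum_congr rfl fun r _ => key r,
    Finset.sum_ite_eq' Finset.univ r₀]
  simp

lemma trace_ne_zero {n : ℕ} (P : Matrix (Fin n → Fin 2) (Fin n → Fin 2) ℂ)
    (hP : P ≠ 0) (hproj : P * P = P) (hherm : Pᴴ = P) : Matrix.trace P ≠ 0 := by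
  have key : Matrix.trace P
      = ((∑ i : Fin n → Fin 2, ∑ j : Fin n → Fin 2, Complex.normSq (P j i) : ℝ) : ℂ) := by
    conv_lhs => rw [← hproj]
    nth_rewrite 1 [← hherm]
    rw [Matrix.trace]
    push_cast
    refine Finset.sum_congr rfl fun i _ => ?_
    rw [Matrix.diag, Matrix.mul_apply]
    refine Finset.sum_congr rfl fun j _ => ?_
    rw [Matrix.conjTranspose_apply, Complex.normSq_eq_conj_mul_self]
    rfl
  intro h0
  rw [key] at h0
  norm_cast at h0
  have hnn : ∀ i ∈ (Finset.univ : Finset (Fin n → Fin 2)),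
      (0:ℝ) ≤ ∑ j : Fin n → Fin 2, Complex.normSq (P j i) :=
    fun i _ => Finset.sum_nonneg fun j _ => Complex.normSq_nonneg _
  apply hP
  ext j i
  have h1 := (Finset.sum_eq_zero_iff_of_nonneg hnn).mp h0 i (Finset.mem_univ i)
  have h2 := (Finset.sum_eq_zero_iff_of_nonneg
    (fun j _ => Complex.normSq_nonneg (P j i))).mp h1 j (Finset.mem_univ j)
  simpa [Complex.normSq_eq_zero] using h2

lemma kron_mulVec (n : ℕ) (P : Matrix (Fin n → Fin 2) (Fin n → Fin 2) ℂ)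
    (hperm : ∀ π : Equiv.Perm (Fin n), permMat n π * P = P ∧ P * permMat n π = P) :
    (Wn n ⊗ₖ Wn n).mulVec (AUXpicode n P)
      = fun στ => Matrix.trace (PauliOp n στ.1 * P) * Matrix.trace (PauliOp n στ.2 * P) := by
  have hW := Wn_mulVec n P hperm
  funext στ
  have h1 : (Wn n ⊗ₖ Wn n).mulVec (AUXpicode n P) στ
      = (∑ r, Wn n στ.1 r * phiPicode n P r) * (∑ s, Wn n στ.2 s * phiPicode n P s) := by
    rw [Matrix.mulVec, dotProduct, Fintype.sum_prod_type, Finset.sum_mul_sum]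
    refine Finset.sum_congr rfl fun r _ => Finset.sum_congr rfl fun s _ => ?_
    rw [kroneckerMap_apply, AUXpicode]
    ring
  rw [h1]
  have h2 : ∀ τ, (∑ r, Wn n τ r * phiPicode n P r) = Matrix.trace (PauliOp n τ * P) := by
    intro τ
    have := congrFun hW τ
    rw [Matrix.mulVec, dotProduct] at this
    exact this
  rw [h2, h2]

lemma sum_swap3 {κ ι : Type*} [Fintype κ] (S : Finset ι) (F : ι → κ → κ → ℂ) :
    ∑ σ : κ, ∑ τ : κ, ∑ p ∈ S, F p σ τ = ∑ p ∈ S, ∑ σ, ∑ τ, F p σ τ := by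
  calc ∑ σ : κ, ∑ τ : κ, ∑ p ∈ S, F p σ τ
      = ∑ σ : κ, ∑ p ∈ S, ∑ τ, F p σ τ :=
        Finset.sum_congr rfl fun σ _ => Finset.sum_comm
    _ = ∑ p ∈ S, ∑ σ, ∑ τ, F p σ τ := Finset.sum_comm

lemma sum_factor {κ ι : Type*} [Fintype κ] (S : Finset ι) (A B : ι → κ → ℂ) :
    ∑ σ : κ, ∑ τ : κ, ∑ p ∈ S, A p σ * B p τ
      = ∑ p ∈ S, (∑ σ, A p σ) * (∑ τ, B p τ) := by
  rw [sum_swap3]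
  exact Finset.sum_congr rfl fun p _ => (Finset.sum_mul_sum _ _ _ _).symm

/-- For the projector `P` of a permutation-invariant `n`-qubit quantum
code, `M_A^SL (W_n ⊗ W_n) |AUX_picode⟩ = (tr P)² |A^SL⟩` and
`M_B^SL (W_n ⊗ W_n) |AUX_picode⟩ = (tr P) |B^SL⟩`. -/
theorem stmt14 (n : ℕ) (P : Matrix (Fin n → Fin 2) (Fin n → Fin 2) ℂ)
    (hP : P ≠ 0) (hproj : P * P = P) (hherm : Pᴴ = P)
    (hperm : ∀ π : Equiv.Perm (Fin n), permMat n π * P = P ∧ P * permMat n π = P) :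
    ((MASL n * (Wn n ⊗ₖ Wn n)).mulVec (AUXpicode n P) =
        fun i : Fin (n + 1) => (Matrix.trace P) ^ 2 * ASL n P (i : ℕ)) ∧
      ((MBSL n * (Wn n ⊗ₖ Wn n)).mulVec (AUXpicode n P) =
        fun i : Fin (n + 1) => Matrix.trace P * BSL n P (i : ℕ)) := by
  have htr := trace_ne_zero P hP hproj hherm
  have hkron := kron_mulVec n P hperm
  set f : (Fin n → Fin 4) → ℂ := fun τ => Matrix.trace (PauliOp n τ * P) with hf
  have hpow : ((2 : ℂ) ^ (2 * n))⁻¹ * ((2:ℂ) ^ n * (2:ℂ) ^ n) = 1 := by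
    rw [two_mul, pow_add]
    field_simp
  constructor
  · funext i
    rw [← Matrix.mulVec_mulVec, hkron]
    show ∑ στ : (Fin n → Fin 4) × (Fin n → Fin 4), MASL n i στ * (f στ.1 * f στ.2)
      = (Matrix.trace P) ^ 2 * ASL n P (i : ℕ)
    set S := Finset.univ.filter (fun p : Fin n → Fin 4 => pwt p = (i : ℕ)) with hS
    calc ∑ στ : (Fin n → Fin 4) × (Fin n → Fin 4), MASL n i στ * (f στ.1 * f στ.2)
        = ((2 : ℂ) ^ (2 * n))⁻¹ * ∑ σ : Fin n → Fin 4, ∑ τ : Fin n → Fin 4, ∑ p ∈ S,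
            (Matrix.trace (PauliOp n p * PauliOp n σ) * f σ) *
              (Matrix.trace ((PauliOp n p)ᴴ * PauliOp n τ) * f τ) := by
          rw [Fintype.sum_prod_type, Finset.mul_sum]
          refine Finset.sum_congr rfl fun σ _ => ?_
          rw [Finset.mul_sum]
          refine Finset.sum_congr rfl fun τ _ => ?_
          rw [MASL, ← hS, mul_assoc, Finset.sum_mul]
          exact congrArg _ (Finset.sum_congr rfl fun p _ => by ring)
      _ = ((2 : ℂ) ^ (2 * n))⁻¹ * ∑ p ∈ S,
            (∑ σ : Fin n → Fin 4, Matrix.trace (PauliOp n p * PauliOp n σ) * f σ) *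
            (∑ τ : Fin n → Fin 4, Matrix.trace ((PauliOp n p)ᴴ * PauliOp n τ) * f τ) := by
          rw [sum_factor]
      _ = ((2 : ℂ) ^ (2 * n))⁻¹ * ∑ p ∈ S,
            ((2:ℂ)^n * Matrix.trace (PauliOp n p * P)) *
            ((2:ℂ)^n * Matrix.trace ((PauliOp n p)ᴴ * P)) := by
          refine congrArg _ (Finset.sum_congr rfl fun p _ => ?_)
          congr 1
          · rw [← sum_trace_mul n (PauliOp n p) P]
            exact Finset.sum_congr rfl fun σ _ => by rw [hf]; ring
          · rw [← sum_trace_mul n ((PauliOp n p)ᴴ) P]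
            exact Finset.sum_congr rfl fun τ _ => by rw [hf]; ring
      _ = ∑ p ∈ S, Matrix.trace (PauliOp n p * P) * Matrix.trace ((PauliOp n p)ᴴ * P) := by
          rw [Finset.mul_sum]
          refine Finset.sum_congr rfl fun p _ => ?_
          have : ((2:ℂ)^(2*n))⁻¹ *
              ((2:ℂ)^n * Matrix.trace (PauliOp n p * P) *
                ((2:ℂ)^n * Matrix.trace ((PauliOp n p)ᴴ * P)))
              = ((2:ℂ)^(2*n))⁻¹ * ((2:ℂ)^n * (2:ℂ)^n) *
                (Matrix.trace (PauliOp n p * P) * Matrix.trace ((PauliOp n p)ᴴ * P)) := by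
            ring
          rw [this, hpow, one_mul]
      _ = (Matrix.trace P) ^ 2 * ASL n P (i : ℕ) := by
          rw [ASL, ← hS, ← mul_assoc, mul_one_div,
            div_self (pow_ne_zero 2 htr), one_mul]
  · funext i
    rw [← Matrix.mulVec_mulVec, hkron]
    show ∑ στ : (Fin n → Fin 4) × (Fin n → Fin 4), MBSL n i στ * (f στ.1 * f στ.2)
      = Matrix.trace P * BSL n P (i : ℕ)
    set S := Finset.univ.filter (fun p : Fin n → Fin 4 => pwt p = (i : ℕ)) with hS
    calc ∑ στ : (Fin n → Fin 4) × (Fin n → Fin 4), MBSL n i στ * (f στ.1 * f στ.2)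
        = ((2 : ℂ) ^ (2 * n))⁻¹ * ∑ σ : Fin n → Fin 4, ∑ τ : Fin n → Fin 4, ∑ p ∈ S,
            f σ * (Matrix.trace (PauliOp n p * PauliOp n σ * (PauliOp n p)ᴴ * PauliOp n τ)
              * f τ) := by
          rw [Fintype.sum_prod_type, Finset.mul_sum]
          refine Finset.sum_congr rfl fun σ _ => ?_
          rw [Finset.mul_sum]
          refine Finset.sum_congr rfl fun τ _ => ?_
          rw [MBSL, ← hS, mul_assoc, Finset.sum_mul]
          exact congrArg _ (Finset.sum_congr rfl fun p _ => by ring)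
      _ = ((2 : ℂ) ^ (2 * n))⁻¹ * ∑ p ∈ S, ∑ σ : Fin n → Fin 4,
            f σ * ((2:ℂ)^n *
              Matrix.trace (PauliOp n p * PauliOp n σ * (PauliOp n p)ᴴ * P)) := by
          rw [sum_swap3]
          refine congrArg _ (Finset.sum_congr rfl fun p _ => Finset.sum_congr rfl fun σ _ => ?_)
          rw [← Finset.mul_sum]
          congr 1
          rw [← sum_trace_mul n (PauliOp n p * PauliOp n σ * (PauliOp n p)ᴴ) P]
          exact Finset.sum_congr rfl fun τ _ => by rw [hf]; ring
      _ = ((2 : ℂ) ^ (2 * n))⁻¹ * ∑ p ∈ S,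
            ((2:ℂ)^n * ((2:ℂ)^n *
              Matrix.trace ((PauliOp n p)ᴴ * P * PauliOp n p * P))) := by
          refine congrArg _ (Finset.sum_congr rfl fun p _ => ?_)
          have cyc : ∀ A : Matrix (Fin n → Fin 2) (Fin n → Fin 2) ℂ,
              Matrix.trace (PauliOp n p * A * (PauliOp n p)ᴴ * P)
                = Matrix.trace ((PauliOp n p)ᴴ * P * PauliOp n p * A) := by
            intro A
            rw [mul_assoc (PauliOp n p * A), Matrix.trace_mul_comm]
            simp only [mul_assoc]
          calc ∑ σ : Fin n → Fin 4, f σ * ((2:ℂ)^n *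
                Matrix.trace (PauliOp n p * PauliOp n σ * (PauliOp n p)ᴴ * P))
              = (2:ℂ)^n * ∑ σ : Fin n → Fin 4, Matrix.trace (PauliOp n σ * P) *
                Matrix.trace ((PauliOp n p)ᴴ * P * PauliOp n p * PauliOp n σ) := by
                rw [Finset.mul_sum]
                refine Finset.sum_congr rfl fun σ _ => ?_
                rw [cyc (PauliOp n σ), hf]; ring
            _ = (2:ℂ)^n * ((2:ℂ)^n *
                Matrix.trace ((PauliOp n p)ᴴ * P * PauliOp n p * P)) := by
                rw [sum_trace_mul n ((PauliOp n p)ᴴ * P * PauliOp n p) P]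
      _ = ∑ p ∈ S, Matrix.trace (PauliOp n p * P * (PauliOp n p)ᴴ * P) := by
          rw [Finset.mul_sum]
          refine Finset.sum_congr rfl fun p _ => ?_
          have cyc2 : Matrix.trace ((PauliOp n p)ᴴ * P * PauliOp n p * P)
              = Matrix.trace (PauliOp n p * P * (PauliOp n p)ᴴ * P) := by
            rw [mul_assoc ((PauliOp n p)ᴴ * P), Matrix.trace_mul_comm]
            simp only [mul_assoc]
          rw [cyc2]
          have : ((2:ℂ)^(2*n))⁻¹ * ((2:ℂ)^n * ((2:ℂ)^n *
              Matrix.trace (PauliOp n p * P * (PauliOp n p)ᴴ * P)))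
              = ((2:ℂ)^(2*n))⁻¹ * ((2:ℂ)^n * (2:ℂ)^n) *
                Matrix.trace (PauliOp n p * P * (PauliOp n p)ᴴ * P) := by ring
          rw [this, hpow, one_mul]
      _ = Matrix.trace P * BSL n P (i : ℕ) := by
          rw [BSL, ← hS, ← mul_assoc, mul_one_div, div_self htr, one_mul]
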